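/- Let μ and ν be atomless probability measures on ℝ with finite first moments, K₂ < K₁ reals, and f < x < g reals with f < K₂, x < K₁ < g, satisfying μ((f,x)) = ν((f,g)), ∫_{(f,x)} w dμ(w) = ∫_{(f,g)} w dν(w), and (K₂ − f)/(g − f) = (K₁ − x)/(g − x) =: Θ. Suppose there exists a martingale coupling π* of μ and ν such that π*({(w,y) : w < f and y ≠ w}) = 0, π*({(w,y) : f < w < x and ¬(f < y < g)}) = 0, and π*({(w,y) : ¬(f < w < x) and f < y < g}) = 0. Then the supremum of A(π,B) over all martingale couplings π of μ and ν and all Borel sets B equals Θ·P_ν(g) + (1 − Θ)·P_ν(f) + (1 − Θ)·(P_μ(x) − P_μ(f)), and it is attained by π = π* with B = (−∞, x). -/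

import Mathlib

open MeasureTheory Set

/-- The put price function `P_η(k) = ∫ (k-x)⁺ dη(x)`. -/
noncomputable def putPrice (η : Measure ℝ) (k : ℝ) : ℝ := ∫ x, max (k - x) 0 ∂η

/-- `π` is a martingale coupling of `μ` and `ν`. -/
def IsMartingaleCoupling (μ ν : Measure ℝ) (π : Measure (ℝ × ℝ)) : Prop :=
  IsProbabilityMeasure π ∧ π.map Prod.fst = μ ∧ π.map Prod.snd = ν ∧
    ∀ B : Set ℝ, MeasurableSet B →
      ∫ p in B ×ˢ (Set.univ : Set ℝ), p.2 ∂π = ∫ x in B, x ∂μ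

/-- The American-put payoff under coupling `π` and exercise set `B`. -/
noncomputable def amPayoff (K₁ K₂ : ℝ) (π : Measure (ℝ × ℝ)) (B : Set ℝ) : ℝ :=
  ∫ p, (B.indicator (fun x => max (K₁ - x) 0) p.1
      + Bᶜ.indicator (fun _ => max (K₂ - p.2) 0) p.1) ∂π

/-!
Weak duality with an explicit dual portfolio. With `Θ g + (1 - Θ) x = K₁` and
`Θ g + (1 - Θ) f = K₂`, hold `Θ` puts at `g` and `1 - Θ` puts at `f` on the second marginal,
`1 - Θ` put spreads `(x, f)` on the first, and on the exercise set buy, at the first date, `Θ`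
units of the underlying if its price is in `(f, g]` and one unit if it is at most `f`.
Convexity of the put payoff makes this portfolio dominate the American payoff for every
exercise set, and the martingale property makes its price the same under every martingale
coupling: the claimed value. The support conditions on `πs` put its mass, up to the null set
`{w = f}`, exactly where each inequality used is an equality.
-/

namespace IsMartingaleCoupling

variable {μ ν : Measure ℝ} {π : Measure (ℝ × ℝ)}

lemma integrable_comp_fst (hπ : IsMartingaleCoupling μ ν π) {h : ℝ → ℝ}
    (hh : Integrable h μ) : Integrable (fun p : ℝ × ℝ => h p.1) π := by
  rw [← hπ.2.1] at hh
  exact hh.comp_measurable measurable_fst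

lemma integrable_comp_snd (hπ : IsMartingaleCoupling μ ν π) {h : ℝ → ℝ}
    (hh : Integrable h ν) : Integrable (fun p : ℝ × ℝ => h p.2) π := by
  rw [← hπ.2.2.1] at hh
  exact hh.comp_measurable measurable_snd

lemma isProbabilityMeasure_left (hπ : IsMartingaleCoupling μ ν π) : IsProbabilityMeasure μ := by
  have := hπ.1
  rw [← hπ.2.1]
  exact Measure.isProbabilityMeasure_map measurable_fst.aemeasurable

lemma isProbabilityMeasure_right (hπ : IsMartingaleCoupling μ ν π) : IsProbabilityMeasure ν := by
  have := hπ.1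
  rw [← hπ.2.2.1]
  exact Measure.isProbabilityMeasure_map measurable_snd.aemeasurable

lemma integral_comp_fst (hπ : IsMartingaleCoupling μ ν π) {h : ℝ → ℝ}
    (hh : AEStronglyMeasurable h μ) : ∫ p, h p.1 ∂π = ∫ w, h w ∂μ := by
  rw [← hπ.2.1] at hh ⊢
  exact (integral_map measurable_fst.aemeasurable hh).symm

lemma integral_comp_snd (hπ : IsMartingaleCoupling μ ν π) {h : ℝ → ℝ}
    (hh : AEStronglyMeasurable h ν) : ∫ p, h p.2 ∂π = ∫ y, h y ∂ν := by
  rw [← hπ.2.2.1] at hh ⊢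
  exact (integral_map measurable_snd.aemeasurable hh).symm

lemma condExp_snd_sub_fst (hπ : IsMartingaleCoupling μ ν π)
    (hμ : Integrable (fun w => w) μ) (hν : Integrable (fun y => y) ν) :
    π[fun p => p.2 - p.1 | MeasurableSpace.comap Prod.fst inferInstance] =ᵐ[π] 0 := by
  have := hπ.1
  have hI₁ := hπ.integrable_comp_fst hμ
  have hI₂ := hπ.integrable_comp_snd hν
  have hfst : (fun p : ℝ × ℝ => p.1) =ᵐ[π]
      π[fun p => p.2 | MeasurableSpace.comap Prod.fst inferInstance] := by
    refine ae_eq_condExp_of_forall_setIntegral_eq measurable_fst.comap_le hI₂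
      (fun s _ _ => hI₁.integrableOn) ?_ (comap_measurable Prod.fst).aestronglyMeasurable
    rintro _ ⟨B, hB, rfl⟩ -
    have hmap := setIntegral_map (f := fun w : ℝ => w) hB aestronglyMeasurable_id
      (measurable_fst.aemeasurable (μ := π))
    rw [hπ.2.1] at hmap
    rw [← prod_univ, hπ.2.2.2 B hB, hmap, prod_univ]
  refine (condExp_sub hI₂ hI₁ _).trans ?_
  rw [condExp_of_stronglyMeasurable measurable_fst.comap_le
    (comap_measurable Prod.fst).stronglyMeasurable hI₁]
  filter_upwards [hfst] with p hp
  simp [← hp]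

lemma integrable_comp_fst_mul_sub (hπ : IsMartingaleCoupling μ ν π)
    (hμ : Integrable (fun w => w) μ) (hν : Integrable (fun y => y) ν) {h : ℝ → ℝ}
    (hh : Measurable h) {C : ℝ} (hC : ∀ w, ‖h w‖ ≤ C) :
    Integrable (fun p : ℝ × ℝ => h p.1 * (p.2 - p.1)) π :=
  ((hπ.integrable_comp_snd hν).sub (hπ.integrable_comp_fst hμ)).bdd_mul
    (hh.comp measurable_fst).aestronglyMeasurable (ae_of_all _ fun p => hC p.1)

lemma integral_comp_fst_mul_sub (hπ : IsMartingaleCoupling μ ν π)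
    (hμ : Integrable (fun w => w) μ) (hν : Integrable (fun y => y) ν) {h : ℝ → ℝ}
    (hh : Measurable h) {C : ℝ} (hC : ∀ w, ‖h w‖ ≤ C) :
    ∫ p, h p.1 * (p.2 - p.1) ∂π = 0 := by
  have := hπ.1
  have hhm : StronglyMeasurable[MeasurableSpace.comap Prod.fst inferInstance]
      fun p : ℝ × ℝ => h p.1 :=
    (hh.comp (comap_measurable Prod.fst)).stronglyMeasurable
  rw [← integral_condExp measurable_fst.comap_le]
  refine (integral_congr_ae ((condExp_mul_of_stronglyMeasurable_left hhm
    (hπ.integrable_comp_fst_mul_sub hμ hν hh hC) ((hπ.integrable_comp_snd hν).sub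
    (hπ.integrable_comp_fst hμ))).trans ?_)).trans (integral_zero _ _)
  filter_upwards [hπ.condExp_snd_sub_fst hμ hν] with p hp
  simp [hp]

lemma ae_fst_ne (hπ : IsMartingaleCoupling μ ν π) {w : ℝ} (hw : μ {w} = 0) :
    ∀ᵐ p ∂π, p.1 ≠ w := by
  have hμw : ∀ᵐ v ∂π.map Prod.fst, v ≠ w := by
    rw [hπ.2.1]
    exact measure_eq_zero_iff_ae_notMem.1 hw
  exact (ae_map_iff measurable_fst.aemeasurable (measurableSet_singleton w).compl).1 hμw

end IsMartingaleCoupling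

lemma max_sub_le_max_sub_add_indicator_mul (c w y : ℝ) :
    max (c - w) 0 ≤ max (c - y) 0 + (Iic c).indicator 1 w * (y - w) := by
  by_cases hw : w ≤ c
  · rw [indicator_of_mem (mem_Iic.2 hw), Pi.one_apply, one_mul, max_eq_left (by linarith)]
    linarith [le_max_left (c - y) 0]
  · rw [indicator_of_notMem (by simpa using hw), zero_mul, add_zero, max_eq_right (by linarith)]
    exact le_max_right _ _

lemma max_sub_eq_max_sub_add_indicator_mul {c w y : ℝ} (h : w ≤ c ↔ y ≤ c) :
    max (c - w) 0 = max (c - y) 0 + (Iic c).indicator 1 w * (y - w) := by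
  by_cases hw : w ≤ c
  · rw [indicator_of_mem (mem_Iic.2 hw), Pi.one_apply, one_mul, max_eq_left (by linarith),
      max_eq_left (by linarith [h.1 hw])]
    ring
  · rw [indicator_of_notMem (by simpa using hw), zero_mul, add_zero,
      max_eq_right (by linarith), max_eq_right (by linarith [mt h.2 hw])]

noncomputable def putMix (t a b y : ℝ) : ℝ := t * max (a - y) 0 + (1 - t) * max (b - y) 0

/-- The slope `-putMixDelta t a b w` is a subgradient of `putMix t a b` at `w`. -/
noncomputable def putMixDelta (t a b w : ℝ) : ℝ :=
  t * (Iic a).indicator 1 w + (1 - t) * (Iic b).indicator 1 w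

section PutMix

variable {t a b : ℝ}

lemma max_sub_le_putMix (ht₀ : 0 ≤ t) (ht₁ : t ≤ 1) (y : ℝ) :
    max (t * a + (1 - t) * b - y) 0 ≤ putMix t a b y := by
  have := sub_nonneg.2 ht₁
  refine max_le ?_ (by unfold putMix; positivity)
  unfold putMix
  nlinarith [le_max_left (a - y) 0, le_max_left (b - y) 0]

lemma putMix_eq_max_sub (ht₀ : 0 ≤ t) (ht₁ : t ≤ 1) {y : ℝ}
    (hy : y ≤ a ∧ y ≤ b ∨ a ≤ y ∧ b ≤ y) :
    putMix t a b y = max (t * a + (1 - t) * b - y) 0 := by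
  have := sub_nonneg.2 ht₁
  unfold putMix
  rcases hy with ⟨ha, hb⟩ | ⟨ha, hb⟩
  · rw [max_eq_left (by linarith), max_eq_left (by linarith), max_eq_left (by nlinarith)]
    ring
  · rw [max_eq_right (by linarith), max_eq_right (by linarith), max_eq_right (by nlinarith)]
    ring

lemma putMix_mono_right (ht₁ : t ≤ 1) {b b' : ℝ} (hb : b ≤ b') (y : ℝ) :
    putMix t a b y ≤ putMix t a b' y := by
  unfold putMix
  gcongr

lemma putMix_eq_of_le {b b' y : ℝ} (hb : b ≤ y) (hb' : b' ≤ y) :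
    putMix t a b y = putMix t a b' y := by
  simp only [putMix, max_eq_right (sub_nonpos.2 hb), max_eq_right (sub_nonpos.2 hb')]

lemma putMix_le_add_putMixDelta_mul (ht₀ : 0 ≤ t) (ht₁ : t ≤ 1) (w y : ℝ) :
    putMix t a b w ≤ putMix t a b y + putMixDelta t a b w * (y - w) := by
  have := sub_nonneg.2 ht₁
  have ha := mul_le_mul_of_nonneg_left (max_sub_le_max_sub_add_indicator_mul a w y) ht₀
  have hb := mul_le_mul_of_nonneg_left (max_sub_le_max_sub_add_indicator_mul b w y) this
  unfold putMix putMixDelta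
  linarith

lemma putMix_eq_add_putMixDelta_mul {w y : ℝ} (ha : w ≤ a ↔ y ≤ a) (hb : w ≤ b ↔ y ≤ b) :
    putMix t a b w = putMix t a b y + putMixDelta t a b w * (y - w) := by
  unfold putMix putMixDelta
  rw [max_sub_eq_max_sub_add_indicator_mul ha, max_sub_eq_max_sub_add_indicator_mul hb]
  ring

lemma norm_indicator_putMixDelta_le (B : Set ℝ) (w : ℝ) :
    ‖B.indicator (putMixDelta t a b) w‖ ≤ |t| + |1 - t| := by
  refine (norm_indicator_le_norm_self _ _).trans ?_
  rw [Real.norm_eq_abs]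
  have hind : ∀ c : ℝ, |(Iic c).indicator (1 : ℝ → ℝ) w| ≤ 1 := fun c => by
    by_cases h : w ∈ Iic c <;> simp [h]
  unfold putMixDelta
  refine (abs_add_le _ _).trans (add_le_add ?_ ?_) <;>
    exact (abs_mul _ _).trans_le (mul_le_of_le_one_right (abs_nonneg _) (hind _))

lemma measurable_putMixDelta : Measurable (putMixDelta t a b) :=
  (measurable_const.mul (measurable_const.indicator measurableSet_Iic)).add
    (measurable_const.mul (measurable_const.indicator measurableSet_Iic))

lemma integrable_max_sub {η : Measure ℝ} [IsFiniteMeasure η] (hη : Integrable (fun y => y) η)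
    (k : ℝ) : Integrable (fun y => max (k - y) 0) η :=
  ((integrable_const k).sub hη).pos_part

lemma integrable_putMix {η : Measure ℝ} [IsFiniteMeasure η] (hη : Integrable (fun y => y) η) :
    Integrable (putMix t a b) η :=
  ((integrable_max_sub hη a).const_mul t).add ((integrable_max_sub hη b).const_mul (1 - t))

lemma integral_putMix {η : Measure ℝ} [IsFiniteMeasure η] (hη : Integrable (fun y => y) η) :
    ∫ y, putMix t a b y ∂η = t * putPrice η a + (1 - t) * putPrice η b := by
  simp only [putMix, putPrice]
  rw [integral_add ((integrable_max_sub hη a).const_mul t)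
    ((integrable_max_sub hη b).const_mul (1 - t)), integral_const_mul, integral_const_mul]

end PutMix

/-- The integrand of `amPayoff`. -/
noncomputable def exercisePayoff (K₁ K₂ : ℝ) (B : Set ℝ) (p : ℝ × ℝ) : ℝ :=
  B.indicator (fun x => max (K₁ - x) 0) p.1 + Bᶜ.indicator (fun _ => max (K₂ - p.2) 0) p.1

/-- The dual portfolio: a static position in puts on both marginals, plus `putMixDelta Θ g f w`
units of the underlying bought at the first date on the exercise set `B`. -/
noncomputable def superhedge (Θ f x g : ℝ) (B : Set ℝ) (p : ℝ × ℝ) : ℝ :=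
  putMix Θ g x p.1 - putMix Θ g f p.1 + putMix Θ g f p.2
    + B.indicator (putMixDelta Θ g f) p.1 * (p.2 - p.1)

section Superhedge

variable {Θ f x g K₁ K₂ : ℝ}

lemma exercisePayoff_nonneg (K₁ K₂ : ℝ) (B : Set ℝ) (p : ℝ × ℝ) :
    0 ≤ exercisePayoff K₁ K₂ B p :=
  add_nonneg (indicator_nonneg (fun _ _ => le_max_right _ _) _)
    (indicator_nonneg (fun _ _ => le_max_right _ _) _)

/-- Exercising at the first date is dominated by `putMix Θ g x`, by convexity of `putMix Θ g f`;
waiting is dominated by `putMix Θ g f`, and the `μ`-position is nonnegative. -/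
lemma exercisePayoff_le_superhedge (hΘ₀ : 0 ≤ Θ) (hΘ₁ : Θ ≤ 1) (hfx : f ≤ x)
    (hK₁ : Θ * g + (1 - Θ) * x = K₁) (hK₂ : Θ * g + (1 - Θ) * f = K₂) (B : Set ℝ)
    (p : ℝ × ℝ) : exercisePayoff K₁ K₂ B p ≤ superhedge Θ f x g B p := by
  obtain ⟨w, y⟩ := p
  unfold exercisePayoff superhedge
  by_cases hw : w ∈ B
  · have hput := hK₁ ▸ max_sub_le_putMix (a := g) (b := x) hΘ₀ hΘ₁ w
    have hconvex := putMix_le_add_putMixDelta_mul (a := g) (b := f) hΘ₀ hΘ₁ w y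
    simp only [indicator_of_mem hw, indicator_of_notMem (notMem_compl_iff.2 hw)]
    linarith
  · have hput := hK₂ ▸ max_sub_le_putMix (a := g) (b := f) hΘ₀ hΘ₁ y
    have hmono := putMix_mono_right (a := g) hΘ₁ hfx w
    simp only [indicator_of_notMem hw, indicator_of_mem (mem_compl hw)]
    linarith

lemma exercisePayoff_Iio_eq_superhedge (hΘ₀ : 0 ≤ Θ) (hΘ₁ : Θ ≤ 1) (hfx : f ≤ x) (hxg : x ≤ g)
    (hK₁ : Θ * g + (1 - Θ) * x = K₁) (hK₂ : Θ * g + (1 - Θ) * f = K₂) {p : ℝ × ℝ}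
    (hin : p.1 < x → (p.1 ≤ g ↔ p.2 ≤ g) ∧ (p.1 ≤ f ↔ p.2 ≤ f))
    (hout : x ≤ p.1 → p.2 ≤ f ∨ g ≤ p.2) :
    exercisePayoff K₁ K₂ (Iio x) p = superhedge Θ f x g (Iio x) p := by
  obtain ⟨w, y⟩ := p
  dsimp only at hin hout
  unfold exercisePayoff superhedge
  by_cases hw : w < x
  · have hput := hK₁ ▸ putMix_eq_max_sub (a := g) (b := x) hΘ₀ hΘ₁ (.inl ⟨by linarith, hw.le⟩)
    have hlinear := putMix_eq_add_putMixDelta_mul (t := Θ) (hin hw).1 (hin hw).2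
    simp only [indicator_of_mem (mem_Iio.2 hw),
      indicator_of_notMem (notMem_compl_iff.2 (mem_Iio.2 hw))]
    linarith
  · have hxw := not_lt.1 hw
    have hside : y ≤ g ∧ y ≤ f ∨ g ≤ y ∧ f ≤ y := by
      rcases hout hxw with hy | hy
      exacts [.inl ⟨by linarith, hy⟩, .inr ⟨hy, by linarith⟩]
    have hput := hK₂ ▸ putMix_eq_max_sub (a := g) (b := f) hΘ₀ hΘ₁ hside
    have hflat := putMix_eq_of_le (t := Θ) (a := g) hxw (hfx.trans hxw)
    simp only [indicator_of_notMem (notMem_Iio.2 hxw),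
      indicator_of_mem (mem_compl (notMem_Iio.2 hxw))]
    linarith

end Superhedge

namespace IsMartingaleCoupling

variable {μ ν : Measure ℝ} {π : Measure (ℝ × ℝ)}
variable {Θ f x g K₁ K₂ : ℝ} {B : Set ℝ}

lemma integrable_superhedge (hπ : IsMartingaleCoupling μ ν π)
    (hμ : Integrable (fun w => w) μ) (hν : Integrable (fun y => y) ν) (hB : MeasurableSet B) :
    Integrable (superhedge Θ f x g B) π := by
  have := hπ.isProbabilityMeasure_left
  have := hπ.isProbabilityMeasure_right
  exact (((hπ.integrable_comp_fst (integrable_putMix hμ)).sub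
    (hπ.integrable_comp_fst (integrable_putMix hμ))).add
    (hπ.integrable_comp_snd (integrable_putMix hν))).add
    (hπ.integrable_comp_fst_mul_sub hμ hν (measurable_putMixDelta.indicator hB)
      (norm_indicator_putMixDelta_le B))

lemma integral_superhedge (hπ : IsMartingaleCoupling μ ν π)
    (hμ : Integrable (fun w => w) μ) (hν : Integrable (fun y => y) ν) (hB : MeasurableSet B) :
    ∫ p, superhedge Θ f x g B p ∂π = Θ * putPrice ν g + (1 - Θ) * putPrice ν f
      + (1 - Θ) * (putPrice μ x - putPrice μ f) := by
  have := hπ.isProbabilityMeasure_left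
  have := hπ.isProbabilityMeasure_right
  have hμx := integrable_putMix (t := Θ) (a := g) (b := x) hμ
  have hμf := integrable_putMix (t := Θ) (a := g) (b := f) hμ
  have hνf := integrable_putMix (t := Θ) (a := g) (b := f) hν
  have hratio := norm_indicator_putMixDelta_le (t := Θ) (a := g) (b := f) B
  have hmeas := measurable_putMixDelta (t := Θ) (a := g) (b := f) |>.indicator hB
  unfold superhedge
  rw [integral_add _ (hπ.integrable_comp_fst_mul_sub hμ hν hmeas hratio),
    integral_add _ (hπ.integrable_comp_snd hνf),
    integral_sub (hπ.integrable_comp_fst hμx) (hπ.integrable_comp_fst hμf),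
    hπ.integral_comp_fst_mul_sub hμ hν hmeas hratio,
    hπ.integral_comp_fst hμx.aestronglyMeasurable, hπ.integral_comp_fst hμf.aestronglyMeasurable,
    hπ.integral_comp_snd hνf.aestronglyMeasurable,
    integral_putMix hμ, integral_putMix hμ, integral_putMix hν]
  · ring
  · exact (hπ.integrable_comp_fst hμx).sub (hπ.integrable_comp_fst hμf)
  · exact ((hπ.integrable_comp_fst hμx).sub (hπ.integrable_comp_fst hμf)).add
      (hπ.integrable_comp_snd hνf)

lemma amPayoff_le (hπ : IsMartingaleCoupling μ ν π) (hμ : Integrable (fun w => w) μ)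
    (hν : Integrable (fun y => y) ν) (hΘ₀ : 0 ≤ Θ) (hΘ₁ : Θ ≤ 1) (hfx : f ≤ x)
    (hK₁ : Θ * g + (1 - Θ) * x = K₁)
    (hK₂ : Θ * g + (1 - Θ) * f = K₂) (hB : MeasurableSet B) :
    amPayoff K₁ K₂ π B ≤ Θ * putPrice ν g + (1 - Θ) * putPrice ν f
      + (1 - Θ) * (putPrice μ x - putPrice μ f) :=
  (integral_mono_of_nonneg (ae_of_all _ (exercisePayoff_nonneg K₁ K₂ B))
    (hπ.integrable_superhedge hμ hν hB)
    (ae_of_all _ (exercisePayoff_le_superhedge hΘ₀ hΘ₁ hfx hK₁ hK₂ B))).trans_eq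
    (hπ.integral_superhedge hμ hν hB)

lemma amPayoff_Iio_eq (hπ : IsMartingaleCoupling μ ν π) (hμ : Integrable (fun w => w) μ)
    (hν : Integrable (fun y => y) ν)
    (hΘ₀ : 0 ≤ Θ) (hΘ₁ : Θ ≤ 1) (hfx : f ≤ x) (hxg : x ≤ g)
    (hK₁ : Θ * g + (1 - Θ) * x = K₁) (hK₂ : Θ * g + (1 - Θ) * f = K₂)
    (hin : ∀ᵐ p ∂π, p.1 < x → (p.1 ≤ g ↔ p.2 ≤ g) ∧ (p.1 ≤ f ↔ p.2 ≤ f))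
    (hout : ∀ᵐ p ∂π, x ≤ p.1 → p.2 ≤ f ∨ g ≤ p.2) :
    amPayoff K₁ K₂ π (Iio x) = Θ * putPrice ν g + (1 - Θ) * putPrice ν f
      + (1 - Θ) * (putPrice μ x - putPrice μ f) := by
  refine (integral_congr_ae ?_).trans
    (hπ.integral_superhedge hμ hν (measurableSet_Iio (a := x)))
  filter_upwards [hin, hout] with p hp₁ hp₂
  exact exercisePayoff_Iio_eq_superhedge hΘ₀ hΘ₁ hfx hxg hK₁ hK₂ hp₁ hp₂

end IsMartingaleCoupling

section Support

variable {π : Measure (ℝ × ℝ)} {f x g : ℝ}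

lemma ae_fst_lt_imp_same_side (hxg : x ≤ g) (hf : ∀ᵐ p ∂π, p.1 ≠ f)
    (h1 : π {p : ℝ × ℝ | p.1 < f ∧ p.2 ≠ p.1} = 0)
    (h2 : π {p : ℝ × ℝ | f < p.1 ∧ p.1 < x ∧ ¬ (f < p.2 ∧ p.2 < g)} = 0) :
    ∀ᵐ p ∂π, p.1 < x → (p.1 ≤ g ↔ p.2 ≤ g) ∧ (p.1 ≤ f ↔ p.2 ≤ f) := by
  filter_upwards [hf, measure_eq_zero_iff_ae_notMem.1 h1, measure_eq_zero_iff_ae_notMem.1 h2]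
    with p hpf hp₁ hp₂ hpx
  rcases hpf.lt_or_gt with hlt | hgt
  · rw [not_not.1 fun hne => hp₁ ⟨hlt, hne⟩]
    exact ⟨Iff.rfl, Iff.rfl⟩
  · obtain ⟨hfy, hyg⟩ := not_not.1 fun hy => hp₂ ⟨hgt, hpx, hy⟩
    exact ⟨iff_of_true (by linarith) hyg.le, iff_of_false (by linarith) (by linarith)⟩

lemma ae_le_fst_imp_snd_le_or_ge
    (h3 : π {p : ℝ × ℝ | ¬ (f < p.1 ∧ p.1 < x) ∧ f < p.2 ∧ p.2 < g} = 0) :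
    ∀ᵐ p ∂π, x ≤ p.1 → p.2 ≤ f ∨ g ≤ p.2 := by
  filter_upwards [measure_eq_zero_iff_ae_notMem.1 h3] with p hp hxp
  by_contra! hy
  exact hp ⟨fun h => (not_lt.2 hxp) h.2, hy⟩

end Support

theorem optimal_model_dispersion_general
    (μ ν : Measure ℝ)
    (hμint : Integrable (fun w => w) μ) (hνint : Integrable (fun w => w) ν)
    (hμa : ∀ w : ℝ, μ {w} = 0)
    (f x g K₁ K₂ : ℝ)
    (hfx : f < x) (hxg : x < g)
    (hfK₂ : f < K₂) (hK₁g : K₁ < g)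
    (hΘ : (K₂ - f) / (g - f) = (K₁ - x) / (g - x))
    (πs : Measure (ℝ × ℝ)) (hπs : IsMartingaleCoupling μ ν πs)
    (h1 : πs {p : ℝ × ℝ | p.1 < f ∧ p.2 ≠ p.1} = 0)
    (h2 : πs {p : ℝ × ℝ | f < p.1 ∧ p.1 < x ∧ ¬ (f < p.2 ∧ p.2 < g)} = 0)
    (h3 : πs {p : ℝ × ℝ | ¬ (f < p.1 ∧ p.1 < x) ∧ f < p.2 ∧ p.2 < g} = 0) :
    sSup { r : ℝ | ∃ π : Measure (ℝ × ℝ), ∃ B : Set ℝ,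
        IsMartingaleCoupling μ ν π ∧ MeasurableSet B ∧ r = amPayoff K₁ K₂ π B }
      = ((K₂ - f) / (g - f)) * putPrice ν g
        + (1 - (K₂ - f) / (g - f)) * putPrice ν f
        + (1 - (K₂ - f) / (g - f)) * (putPrice μ x - putPrice μ f) ∧
    amPayoff K₁ K₂ πs (Set.Iio x)
      = ((K₂ - f) / (g - f)) * putPrice ν g
        + (1 - (K₂ - f) / (g - f)) * putPrice ν f
        + (1 - (K₂ - f) / (g - f)) * (putPrice μ x - putPrice μ f) := by
  set Θ := (K₂ - f) / (g - f)
  have hΘ₀ : 0 ≤ Θ := div_nonneg (by linarith) (by linarith)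
  have hΘ₁ : Θ ≤ 1 := hΘ ▸ (div_le_one (by linarith)).2 (by linarith)
  have hK₁ : Θ * g + (1 - Θ) * x = K₁ := by
    rw [hΘ]; linear_combination div_mul_cancel₀ (K₁ - x) (by linarith : g - x ≠ 0)
  have hK₂ : Θ * g + (1 - Θ) * f = K₂ := by
    linear_combination div_mul_cancel₀ (K₂ - f) (by linarith : g - f ≠ 0)
  have hattained := hπs.amPayoff_Iio_eq hμint hνint hΘ₀ hΘ₁ hfx.le hxg.le hK₁ hK₂
    (ae_fst_lt_imp_same_side hxg.le (hπs.ae_fst_ne (hμa f)) h1 h2)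
    (ae_le_fst_imp_snd_le_or_ge h3)
  refine ⟨IsGreatest.csSup_eq ⟨⟨πs, Iio x, hπs, measurableSet_Iio, hattained.symm⟩, ?_⟩,
    hattained⟩
  rintro _ ⟨π, B, hπ, hB, rfl⟩
  exact hπ.amPayoff_le hμint hνint hΘ₀ hΘ₁ hfx.le hK₁ hK₂ hB

/-- Optimality of the left-curtain-type model: if a martingale coupling `πs` keeps mass
below `f` constant, maps `(f,x)` into `(f,g)` and nothing else into `(f,g)`, then the
supremum of the American-put payoff over all martingale couplings and Borel exercise
sets equals `Θ·P_ν(g) + (1-Θ)·P_ν(f) + (1-Θ)·(P_μ(x)-P_μ(f))`, attained by `πs` with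
exercise set `(-∞, x)`. -/
theorem optimal_model_dispersion
    (μ ν : Measure ℝ) [IsProbabilityMeasure μ] [IsProbabilityMeasure ν]
    (hμint : Integrable (fun w => w) μ) (hνint : Integrable (fun w => w) ν)
    (hμa : ∀ w : ℝ, μ {w} = 0) (hνa : ∀ w : ℝ, ν {w} = 0)
    (f x g K₁ K₂ : ℝ)
    (hfx : f < x) (hxg : x < g) (hK : K₂ < K₁)
    (hfK₂ : f < K₂) (hxK₁ : x < K₁) (hK₁g : K₁ < g)
    (hmass : μ (Set.Ioo f x) = ν (Set.Ioo f g))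
    (hmean : ∫ w in Set.Ioo f x, w ∂μ = ∫ w in Set.Ioo f g, w ∂ν)
    (hΘ : (K₂ - f) / (g - f) = (K₁ - x) / (g - x))
    (πs : Measure (ℝ × ℝ)) (hπs : IsMartingaleCoupling μ ν πs)
    (h1 : πs {p : ℝ × ℝ | p.1 < f ∧ p.2 ≠ p.1} = 0)
    (h2 : πs {p : ℝ × ℝ | f < p.1 ∧ p.1 < x ∧ ¬ (f < p.2 ∧ p.2 < g)} = 0)
    (h3 : πs {p : ℝ × ℝ | ¬ (f < p.1 ∧ p.1 < x) ∧ f < p.2 ∧ p.2 < g} = 0) :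
    sSup { r : ℝ | ∃ π : Measure (ℝ × ℝ), ∃ B : Set ℝ,
        IsMartingaleCoupling μ ν π ∧ MeasurableSet B ∧ r = amPayoff K₁ K₂ π B }
      = ((K₂ - f) / (g - f)) * putPrice ν g
        + (1 - (K₂ - f) / (g - f)) * putPrice ν f
        + (1 - (K₂ - f) / (g - f)) * (putPrice μ x - putPrice μ f) ∧
    amPayoff K₁ K₂ πs (Set.Iio x)
      = ((K₂ - f) / (g - f)) * putPrice ν g
        + (1 - (K₂ - f) / (g - f)) * putPrice ν f
        + (1 - (K₂ - f) / (g - f)) * (putPrice μ x - putPrice μ f) :=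
  optimal_model_dispersion_general μ ν hμint hνint hμa f x g K₁ K₂ hfx hxg hfK₂ hK₁g hΘ πs hπs h1 h2
    h3
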